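/- arXiv:2303.15512 — 5 statements merged into one kernel-verified Lean document; each statement's English description precedes it below -/
import Mathlib

section
/- Let $V$ be a real vector space equipped with a Lorentzian inner product $\eta$ of signature $(-,+,\dots,+)$. If $n_1, n_2, n_3 \in V$ are null vectors (i.e. $\eta(n_i,n_i)=0$) that are pairwise linearly independent, then $n_1, n_2, n_3$ are linearly independent. -/
/-!
Two linearly independent null vectors `u`, `v` of Minkowski space satisfy `η(u, v) ≠ 0`: by the
Lagrange identity `∑_{i ≥ 1} (u₀ vᵢ - v₀ uᵢ)² = u₀² η(v,v) - 2 u₀ v₀ η(u,v) + v₀² η(u,u)`,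
`η(u, v) = 0` would force `u₀ v = v₀ u`, and a nonzero null vector has `u₀ ≠ 0`.
Pairing a relation `a n₁ + b n₂ + c n₃ = 0` with each `nᵢ` then gives a linear system whose
matrix `[[0, η₁₂, η₁₃], [η₁₂, 0, η₂₃], [η₁₃, η₂₃, 0]]` has determinant `2 η₁₂ η₁₃ η₂₃ ≠ 0`.
-/

/-- The standard Lorentzian (Minkowski) inner product of signature `(-,+,…,+)` on `ℝ^d`. -/
noncomputable def minkowski (d : ℕ) (u v : Fin d → ℝ) : ℝ :=
  ∑ i : Fin d, (if (i : ℕ) = 0 then (-1 : ℝ) else 1) * u i * v i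

theorem LinearMap.BilinForm.IsSymm.linearIndependent_of_isotropic_of_pairing_ne_zero
    {K V : Type*} [Field K] [NeZero (2 : K)] [AddCommGroup V] [Module K V]
    {B : LinearMap.BilinForm K V} (hB : B.IsSymm) {x y z : V}
    (hx : B x x = 0) (hy : B y y = 0) (hz : B z z = 0)
    (hxy : B x y ≠ 0) (hxz : B x z ≠ 0) (hyz : B y z ≠ 0) :
    LinearIndependent K ![x, y, z] := by
  rw [Fintype.linearIndependent_iff]
  intro g hg
  rw [Fin.sum_univ_three] at hg
  simp only [Matrix.cons_val_zero, Matrix.cons_val_one, Matrix.cons_val_two] at hg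
  have pair (w : V) : g 0 * B w x + g 1 * B w y + g 2 * B w z = 0 := by
    simpa using congrArg (B w) hg
  have ex := pair x
  have ey := pair y
  have ez := pair z
  rw [hx] at ex
  rw [hy, hB.eq y x] at ey
  rw [hz, hB.eq z x, hB.eq z y] at ez
  have h0 : g 0 * (2 * B x y * B x z) = 0 := by
    linear_combination B x z * ey + B x y * ez - B y z * ex
  have h1 : g 1 * (2 * B x y * B y z) = 0 := by
    linear_combination B y z * ex + B x y * ez - B x z * ey
  have h2 : g 2 * (2 * B x z * B y z) = 0 := by
    linear_combination B y z * ex + B x z * ey - B x y * ez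
  intro i
  fin_cases i
  · simpa [hxy, hxz, two_ne_zero] using h0
  · simpa [hxy, hyz, two_ne_zero] using h1
  · simpa [hxz, hyz, two_ne_zero] using h2

noncomputable def minkowskiForm (d : ℕ) : LinearMap.BilinForm ℝ (Fin d → ℝ) :=
  Matrix.toBilin' (Matrix.diagonal fun i : Fin d => if (i : ℕ) = 0 then -1 else 1)

theorem minkowskiForm_apply (d : ℕ) (u v : Fin d → ℝ) : minkowskiForm d u v = minkowski d u v := by
  rw [minkowskiForm, Matrix.toBilin'_apply', minkowski, dotProduct]
  refine Finset.sum_congr rfl fun i _ => ?_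
  rw [Matrix.mulVec_diagonal]
  ring

theorem isSymm_minkowskiForm (d : ℕ) : (minkowskiForm d).IsSymm :=
  Matrix.isSymm_toBilin'_iff_isSymm.mpr (Matrix.isSymm_diagonal _)

theorem minkowski_succ {d : ℕ} (u v : Fin (d + 1) → ℝ) :
    minkowski (d + 1) u v = -(u 0 * v 0) + ∑ i : Fin d, u i.succ * v i.succ := by
  simp [minkowski, Fin.sum_univ_succ]

theorem sum_sq_sub_eq_minkowski {d : ℕ} (u v : Fin (d + 1) → ℝ) :
    ∑ i : Fin d, (u 0 * v i.succ - v 0 * u i.succ) ^ 2 =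
      u 0 ^ 2 * minkowski (d + 1) v v - 2 * u 0 * v 0 * minkowski (d + 1) u v +
        v 0 ^ 2 * minkowski (d + 1) u u := by
  have expand : ∑ i : Fin d, (u 0 * v i.succ - v 0 * u i.succ) ^ 2 =
      ∑ i : Fin d, (u 0 ^ 2 * (v i.succ * v i.succ) - 2 * u 0 * v 0 * (u i.succ * v i.succ) +
        v 0 ^ 2 * (u i.succ * u i.succ)) :=
    Finset.sum_congr rfl fun i _ => by ring
  rw [expand, Finset.sum_add_distrib, Finset.sum_sub_distrib, ← Finset.mul_sum, ← Finset.mul_sum,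
    ← Finset.mul_sum, minkowski_succ, minkowski_succ, minkowski_succ]
  ring

theorem apply_zero_ne_zero_of_minkowski_self_eq_zero {d : ℕ} {u : Fin (d + 1) → ℝ}
    (hu : minkowski (d + 1) u u = 0) (hne : u ≠ 0) : u 0 ≠ 0 := by
  intro h0
  have hsq : ∑ i : Fin d, u i.succ ^ 2 = 0 := by
    simpa [minkowski_succ, h0, sq] using hu
  have hspace := (Finset.sum_eq_zero_iff_of_nonneg fun i _ => sq_nonneg (u i.succ)).mp hsq
  refine hne (funext fun i => Fin.cases h0 (fun i => ?_) i)
  exact pow_eq_zero_iff two_ne_zero |>.mp (hspace i (Finset.mem_univ i))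

theorem minkowski_ne_zero_of_linearIndependent {d : ℕ} {u v : Fin d → ℝ}
    (hu : minkowski d u u = 0) (hv : minkowski d v v = 0) (huv : LinearIndependent ℝ ![u, v]) :
    minkowski d u v ≠ 0 := by
  cases d with
  | zero => exact absurd (Subsingleton.elim _ _) (huv.ne_zero 0)
  | succ d =>
    intro h
    have hsq : ∑ i : Fin d, (u 0 * v i.succ - v 0 * u i.succ) ^ 2 = 0 := by
      rw [sum_sq_sub_eq_minkowski, hu, hv, h]
      ring
    have hspace := (Finset.sum_eq_zero_iff_of_nonneg fun i _ => sq_nonneg _).mp hsq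
    have hprop : -v 0 • u + u 0 • v = 0 := by
      refine funext fun i => Fin.cases ?_ (fun i => ?_) i
      · simp only [Pi.add_apply, Pi.smul_apply, smul_eq_mul, Pi.zero_apply]
        ring
      · have := pow_eq_zero_iff two_ne_zero |>.mp (hspace i (Finset.mem_univ i))
        simp only [Pi.add_apply, Pi.smul_apply, smul_eq_mul, Pi.zero_apply]
        linarith
    exact apply_zero_ne_zero_of_minkowski_self_eq_zero hu (huv.ne_zero 0)
      (LinearIndependent.pair_iff.mp huv _ _ hprop).2

theorem three_null_pairwise_indep_implies_indep_general
    (d : ℕ) (n₁ n₂ n₃ : Fin d → ℝ)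
    (hnull₁ : n₁ ≠ 0 ∧ minkowski d n₁ n₁ = 0)
    (hnull₂ : n₂ ≠ 0 ∧ minkowski d n₂ n₂ = 0)
    (hnull₃ : n₃ ≠ 0 ∧ minkowski d n₃ n₃ = 0)
    (h12 : LinearIndependent ℝ ![n₁, n₂])
    (h13 : LinearIndependent ℝ ![n₁, n₃])
    (h23 : LinearIndependent ℝ ![n₂, n₃]) :
    LinearIndependent ℝ ![n₁, n₂, n₃] := by
  refine (isSymm_minkowskiForm d).linearIndependent_of_isotropic_of_pairing_ne_zero
    ?_ ?_ ?_ ?_ ?_ ?_ <;> rw [minkowskiForm_apply]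
  exacts [hnull₁.2, hnull₂.2, hnull₃.2,
    minkowski_ne_zero_of_linearIndependent hnull₁.2 hnull₂.2 h12,
    minkowski_ne_zero_of_linearIndependent hnull₁.2 hnull₃.2 h13,
    minkowski_ne_zero_of_linearIndependent hnull₂.2 hnull₃.2 h23]

/-- Three pairwise linearly independent null vectors in Lorentzian signature are
linearly independent. -/
theorem three_null_pairwise_indep_implies_indep
    (d : ℕ) (hd : 3 ≤ d) (n₁ n₂ n₃ : Fin d → ℝ)
    (hnull₁ : n₁ ≠ 0 ∧ minkowski d n₁ n₁ = 0)
    (hnull₂ : n₂ ≠ 0 ∧ minkowski d n₂ n₂ = 0)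
    (hnull₃ : n₃ ≠ 0 ∧ minkowski d n₃ n₃ = 0)
    (h12 : LinearIndependent ℝ ![n₁, n₂])
    (h13 : LinearIndependent ℝ ![n₁, n₃])
    (h23 : LinearIndependent ℝ ![n₂, n₃]) :
    LinearIndependent ℝ ![n₁, n₂, n₃] :=
  three_null_pairwise_indep_implies_indep_general d n₁ n₂ n₃ hnull₁ hnull₂ hnull₃ h12 h13 h23
end

section
/- Let $F(p,q) = (4p^3 - 2qp,\; q,\; 3p^4 - qp^2)$. If $F(p,q) = F(p',q')$ with $(p,q) \neq (p',q')$, then $q' = q$, $p' = -p$, $p \neq 0$, and $q = 2p^2$. Consequently the self-intersection set of the swallowtail surface is exactly $\{(0, q, q^2/4) : q > 0\}$, and $F(p,q)=(0,0,0)$ only for $(p,q)=(0,0)$. -/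
/-! The map preserves `q`, so a double point lies on one level `q = const`. There the differences
of the two remaining coordinates factor as
`2 (p - p') (2 (p² + p p' + p'²) - q)` and `(p - p') (p + p') (3 (p² + p'²) - q)`.
For `p ≠ p'` the first factor forces `q = 2 (p² + p p' + p'²)`; the alternative
`q = 3 (p² + p'²)` in the second would give `(p - p')² = 0`, so `p' = -p` and `q = 2 p²`.
Conversely `(p, 2 p²)` and `(-p, 2 p²)` both map to `(0, 2 p², p⁴)`. -/

/-- The standard swallowtail (`A₃` caustic) parameterization. -/
noncomputable def swallowtail : ℝ × ℝ → (Fin 3 → ℝ) :=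
  fun pq => ![4 * pq.1 ^ 3 - 2 * pq.2 * pq.1, pq.2, 3 * pq.1 ^ 4 - pq.2 * pq.1 ^ 2]

lemma swallowtail_eq_swallowtail_iff (p q p' q' : ℝ) :
    swallowtail (p, q) = swallowtail (p', q') ↔
      4 * p ^ 3 - 2 * q * p = 4 * p' ^ 3 - 2 * q' * p' ∧ q = q' ∧
        3 * p ^ 4 - q * p ^ 2 = 3 * p' ^ 4 - q' * p' ^ 2 := by
  simp [swallowtail, funext_iff, Fin.forall_fin_succ]

lemma eq_neg_of_cubic_eq_of_quartic_eq {p p' q : ℝ} (hne : p ≠ p')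
    (hcubic : 4 * p ^ 3 - 2 * q * p = 4 * p' ^ 3 - 2 * q * p')
    (hquartic : 3 * p ^ 4 - q * p ^ 2 = 3 * p' ^ 4 - q * p' ^ 2) :
    p' = -p ∧ q = 2 * p ^ 2 := by
  have hsub : p - p' ≠ 0 := sub_ne_zero.2 hne
  have hq : q = 2 * (p ^ 2 + p * p' + p' ^ 2) := by
    have h : (p - p') * (4 * (p ^ 2 + p * p' + p' ^ 2) - 2 * q) = 0 := by
      linear_combination hcubic
    linarith [(mul_eq_zero.1 h).resolve_left hsub]
  have hsum : (p + p') * (3 * (p ^ 2 + p' ^ 2) - q) = 0 := by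
    have h : (p - p') * ((p + p') * (3 * (p ^ 2 + p' ^ 2) - q)) = 0 := by
      linear_combination hquartic
    exact (mul_eq_zero.1 h).resolve_left hsub
  have hp' : p' = -p := by
    refine eq_neg_of_add_eq_zero_right ((mul_eq_zero.1 hsum).resolve_right fun h => hsub ?_)
    exact pow_eq_zero_iff two_ne_zero |>.1 (by linear_combination h + hq)
  subst hp'
  exact ⟨rfl, by linear_combination hq⟩

lemma eq_of_swallowtail_eq_of_ne {p q p' q' : ℝ}
    (h : swallowtail (p, q) = swallowtail (p', q')) (hne : (p, q) ≠ (p', q')) :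
    q' = q ∧ p' = -p ∧ p ≠ 0 ∧ q = 2 * p ^ 2 := by
  obtain ⟨hcubic, rfl, hquartic⟩ := (swallowtail_eq_swallowtail_iff p q p' q').1 h
  have hpp' : p ≠ p' := fun hp => hne (by rw [hp])
  obtain ⟨rfl, hq⟩ := eq_neg_of_cubic_eq_of_quartic_eq hpp' hcubic hquartic
  exact ⟨rfl, rfl, fun hp => hpp' (by simp [hp]), hq⟩

lemma swallowtail_two_mul_sq (p : ℝ) :
    swallowtail (p, 2 * p ^ 2) = ![0, 2 * p ^ 2, (2 * p ^ 2) ^ 2 / 4] := by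
  ext i
  fin_cases i <;> simp [swallowtail] <;> ring

lemma swallowtail_neg_two_mul_sq (p : ℝ) :
    swallowtail (-p, 2 * p ^ 2) = swallowtail (p, 2 * p ^ 2) := by
  ext i
  fin_cases i <;> simp [swallowtail] <;> ring

lemma eq_zero_of_swallowtail_eq_zero {p q : ℝ} (h : swallowtail (p, q) = 0) : p = 0 ∧ q = 0 := by
  have hq : q = 0 := by simpa [swallowtail] using congrFun h 1
  subst hq
  have hp : 4 * p ^ 3 = 0 := by simpa [swallowtail] using congrFun h 0
  exact ⟨pow_eq_zero_iff three_ne_zero |>.1 (by linarith), rfl⟩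

/-- Double points of the swallowtail map occur only at `(±p, 2p²)` with `p ≠ 0`;
the self-intersection set is `{(0, q, q²/4) : q > 0}`, and only the origin of
parameter space maps to the origin. -/
theorem swallowtail_self_intersection :
    (∀ p q p' q' : ℝ, swallowtail (p, q) = swallowtail (p', q') → (p, q) ≠ (p', q') →
      q' = q ∧ p' = -p ∧ p ≠ 0 ∧ q = 2 * p ^ 2) ∧
    ({v : Fin 3 → ℝ | ∃ a b : ℝ × ℝ, a ≠ b ∧ swallowtail a = v ∧ swallowtail b = v}
      = {v : Fin 3 → ℝ | ∃ q : ℝ, 0 < q ∧ v = ![0, q, q ^ 2 / 4]}) ∧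
    (∀ p q : ℝ, swallowtail (p, q) = 0 → p = 0 ∧ q = 0) := by
  refine ⟨fun p q p' q' => eq_of_swallowtail_eq_of_ne, ?_,
    fun p q => eq_zero_of_swallowtail_eq_zero⟩
  ext v
  constructor
  · rintro ⟨⟨p, q⟩, ⟨p', q'⟩, hne, rfl, hv⟩
    obtain ⟨-, -, hp, rfl⟩ := eq_of_swallowtail_eq_of_ne hv.symm hne
    exact ⟨2 * p ^ 2, by positivity, swallowtail_two_mul_sq p⟩
  · rintro ⟨q, hq, rfl⟩
    obtain ⟨p, hp, rfl⟩ : ∃ p : ℝ, 0 < p ∧ q = 2 * p ^ 2 :=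
      ⟨√(q / 2), Real.sqrt_pos.2 (half_pos hq), by rw [Real.sq_sqrt (half_pos hq).le]; ring⟩
    refine ⟨(p, 2 * p ^ 2), (-p, 2 * p ^ 2), ?_, swallowtail_two_mul_sq p, ?_⟩
    · exact fun h => by linarith [congrArg Prod.fst h]
    · rw [swallowtail_neg_two_mul_sq, swallowtail_two_mul_sq]
end

section
/- Let $g: \mathbb{R}^4 \to \mathbb{R}^{4\times 4}$ be a smooth map into symmetric matrices with components $g^{\mu\nu}$, $\mu,\nu \in \{w,x,y,z\}$. Suppose that for all small $(p,q,w)$, at the point $(w,\, 4p^3 - 2qp,\, q,\, 3p^4 - qp^2)$ we have $g^{zz} - 2p\,g^{xz} - 2p^2\,g^{yz} + p^2\,g^{xx} + 2p^3\,g^{xy} + p^4\,g^{yy} = 0$. Then at each point $(w,0,0,0)$: $g^{zz} = 0$, $g^{xz} = 0$, and $g^{yz} = \tfrac{1}{2} g^{xx}$. -/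
open Filter Topology

lemma a3_key (f : (Fin 4 → ℝ) → ℝ) (hf : ContDiff ℝ (⊤ : ℕ∞) f) (w : ℝ)
    (h0 : f ![w, 0, 0, 0] = 0) :
    Tendsto (fun p : ℝ => f ![w, 4*p^3, 0, 3*p^4] / p^2) (𝓝[≠] 0) (𝓝 0) := by
  obtain ⟨K, t, ht, hK⟩ := ((hf.of_le (by simp)).contDiffAt
    (x := (![w, 0, 0, 0] : Fin 4 → ℝ))).exists_lipschitzOnWith
  set P : ℝ → (Fin 4 → ℝ) := fun p => ![w, 4*p^3, 0, 3*p^4] with hP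
  have hPc : Continuous P := by
    apply continuous_pi; intro i; fin_cases i <;> simp [hP] <;> fun_prop
  have hP0 : P 0 = ![w, 0, 0, 0] := by
    funext i; fin_cases i <;> simp [hP]
  have hmem : ∀ᶠ p : ℝ in 𝓝 0, P p ∈ t := by
    have h := hPc.continuousAt (x := (0:ℝ))
    rw [ContinuousAt, hP0] at h
    exact h ht
  have hbase : (![w, 0, 0, 0] : Fin 4 → ℝ) ∈ t := mem_of_mem_nhds ht
  have hdist : ∀ p : ℝ, dist (P p) ![w, 0, 0, 0] ≤ 4*|p|^3 + 3*|p|^4 := by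
    intro p
    rw [dist_pi_le_iff (by positivity)]
    intro i
    fin_cases i <;>
      simp [hP, Real.dist_eq, abs_mul, abs_pow] <;>
      nlinarith [abs_nonneg p, pow_nonneg (abs_nonneg p) 3, pow_nonneg (abs_nonneg p) 4]
  apply squeeze_zero_norm' (a := fun p : ℝ => (K : ℝ) * (4*|p| + 3*|p|^2))
  · filter_upwards [nhdsWithin_le_nhds hmem, self_mem_nhdsWithin] with p hpt (hp : p ≠ 0)
    have hb : |f ![w, 4*p^3, 0, 3*p^4]| ≤ (K : ℝ) * (4*|p|^3 + 3*|p|^4) := by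
      have h1 : dist (f (P p)) (f ![w, 0, 0, 0]) ≤ (K : ℝ) * dist (P p) ![w, 0, 0, 0] :=
        hK.dist_le_mul _ hpt _ hbase
      rw [h0, dist_zero_right, Real.norm_eq_abs] at h1
      exact h1.trans (by nlinarith [K.coe_nonneg, hdist p])
    have hp2 : (0:ℝ) < p^2 := by positivity
    have heq : (K:ℝ) * (4*|p|^3 + 3*|p|^4) = (K:ℝ) * (4*|p| + 3*p^2) * p^2 := by
      rw [← sq_abs p]; ring
    rw [Real.norm_eq_abs, abs_div, abs_pow, sq_abs, div_le_iff₀ hp2]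
    linarith [heq ▸ hb]
  · have hc : Continuous (fun p : ℝ => (K : ℝ) * (4*|p| + 3*|p|^2)) := by fun_prop
    have := (hc.tendsto 0).mono_left (nhdsWithin_le_nhds (s := {(0:ℝ)}ᶜ))
    simpa using this



/-- If the smooth symmetric inverse metric `g` makes the covector `dz − p dx − p² dy`
null along the `A₃` big wavefront `(w, 4p³−2qp, q, 3p⁴−qp²)`, then on the `A₃` line
`(w,0,0,0)` we have `g^{zz} = 0`, `g^{xz} = 0` and `g^{yz} = g^{xx}/2`.
Indices: `0 ↔ w`, `1 ↔ x`, `2 ↔ y`, `3 ↔ z`. -/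
theorem a3_null_normal_metric_conditions
    (g : (Fin 4 → ℝ) → (Fin 4 → Fin 4 → ℝ))
    (hg : ContDiff ℝ (⊤ : ℕ∞) g)
    (hsymm : ∀ x i j, g x i j = g x j i)
    (ε : ℝ) (hε : 0 < ε)
    (hnull : ∀ p q w : ℝ, |p| < ε → |q| < ε → |w| < ε →
      g ![w, 4 * p ^ 3 - 2 * q * p, q, 3 * p ^ 4 - q * p ^ 2] 3 3
        - 2 * p * g ![w, 4 * p ^ 3 - 2 * q * p, q, 3 * p ^ 4 - q * p ^ 2] 1 3
        - 2 * p ^ 2 * g ![w, 4 * p ^ 3 - 2 * q * p, q, 3 * p ^ 4 - q * p ^ 2] 2 3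
        + p ^ 2 * g ![w, 4 * p ^ 3 - 2 * q * p, q, 3 * p ^ 4 - q * p ^ 2] 1 1
        + 2 * p ^ 3 * g ![w, 4 * p ^ 3 - 2 * q * p, q, 3 * p ^ 4 - q * p ^ 2] 1 2
        + p ^ 4 * g ![w, 4 * p ^ 3 - 2 * q * p, q, 3 * p ^ 4 - q * p ^ 2] 2 2 = 0) :
    ∀ w : ℝ, |w| < ε →
      g ![w, 0, 0, 0] 3 3 = 0 ∧ g ![w, 0, 0, 0] 1 3 = 0 ∧
      g ![w, 0, 0, 0] 2 3 = (1 / 2) * g ![w, 0, 0, 0] 1 1 := by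
  intro w hw
  have h0ε : |(0:ℝ)| < ε := by simpa using hε
  -- component smoothness
  have hcomp : ∀ i j : Fin 4, ContDiff ℝ (⊤ : ℕ∞) (fun v => g v i j) := by
    intro i j
    exact contDiff_pi.mp (contDiff_pi.mp hg i) j
  set P : ℝ → (Fin 4 → ℝ) := fun p => ![w, 4*p^3, 0, 3*p^4] with hP
  have hPc : Continuous P := by
    apply continuous_pi; intro i; fin_cases i <;> simp [hP] <;> fun_prop
  have hP0 : P 0 = ![w, 0, 0, 0] := by
    funext i; fin_cases i <;> simp [hP]
  -- the null condition at q = 0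
  have hvec : ∀ p : ℝ, (![w, 4 * p ^ 3 - 2 * 0 * p, (0:ℝ), 3 * p ^ 4 - 0 * p ^ 2]) = P p := by
    intro p; funext i; fin_cases i <;> simp [hP] <;> ring
  have hE : ∀ p : ℝ, |p| < ε →
      g (P p) 3 3 - 2 * p * g (P p) 1 3 - 2 * p ^ 2 * g (P p) 2 3
        + p ^ 2 * g (P p) 1 1 + 2 * p ^ 3 * g (P p) 1 2 + p ^ 4 * g (P p) 2 2 = 0 := by
    intro p hp
    have := hnull p 0 w hp h0ε hw
    rwa [hvec p] at this
  -- step 1 : g^{zz} = 0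
  have h33 : g ![w, 0, 0, 0] 3 3 = 0 := by
    have := hE 0 h0ε
    rw [hP0] at this
    simpa using this
  -- generic limits of components along P
  have cmp : ∀ i j : Fin 4, Tendsto (fun p => g (P p) i j) (𝓝[≠] 0) (𝓝 (g ![w,0,0,0] i j)) := by
    intro i j
    have hc : Continuous (fun p => g (P p) i j) := ((hcomp i j).continuous).comp hPc
    have := (hc.tendsto 0).mono_left (nhdsWithin_le_nhds (s := {(0:ℝ)}ᶜ))
    rwa [hP0] at this
  have hpoly : ∀ (f : ℝ → ℝ), Continuous f → Tendsto f (𝓝[≠] 0) (𝓝 (f 0)) := by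
    intro f hf
    exact (hf.tendsto 0).mono_left (nhdsWithin_le_nhds (s := {(0:ℝ)}ᶜ))
  have hεev : ∀ᶠ p : ℝ in 𝓝[≠] 0, |p| < ε ∧ p ≠ 0 := by
    have h1 : ∀ᶠ p : ℝ in 𝓝 (0:ℝ), |p| < ε := by
      have : Metric.ball (0:ℝ) ε ∈ 𝓝 (0:ℝ) := Metric.ball_mem_nhds _ hε
      filter_upwards [this] with p hp
      simpa [Real.dist_eq] using hp
    filter_upwards [nhdsWithin_le_nhds h1, self_mem_nhdsWithin] with p h1 h2
    exact ⟨h1, h2⟩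
  -- key tendsto facts for g33
  have T33 : Tendsto (fun p : ℝ => g (P p) 3 3 / p^2) (𝓝[≠] 0) (𝓝 0) :=
    a3_key (fun v => g v 3 3) (hcomp 3 3) w h33
  have T33p : Tendsto (fun p : ℝ => g (P p) 3 3 / p) (𝓝[≠] 0) (𝓝 0) := by
    have := T33.mul (hpoly id continuous_id)
    simp only [mul_zero, id] at this
    refine this.congr' ?_
    filter_upwards [self_mem_nhdsWithin] with p (hp : p ≠ 0)
    field_simp
  -- step 2 : g^{xz} = 0
  have h13 : g ![w, 0, 0, 0] 1 3 = 0 := by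
    have TL : Tendsto (fun p : ℝ => g (P p) 3 3 / p - 2 * g (P p) 1 3 - 2*p*g (P p) 2 3
        + p * g (P p) 1 1 + 2*p^2 * g (P p) 1 2 + p^3 * g (P p) 2 2) (𝓝[≠] 0)
        (𝓝 (0 - 2 * g ![w,0,0,0] 1 3 - 2*0*g ![w,0,0,0] 2 3 + 0 * g ![w,0,0,0] 1 1
          + 2*0^2 * g ![w,0,0,0] 1 2 + 0^3 * g ![w,0,0,0] 2 2)) := by
      exact (((((T33p.sub ((hpoly (fun _ => (2:ℝ)) (by fun_prop)).mul (cmp 1 3))).sub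
        ((hpoly (fun p => 2*p) (by fun_prop)).mul (cmp 2 3))).add
        ((hpoly (fun p => p) (by fun_prop)).mul (cmp 1 1))).add
        ((hpoly (fun p => 2*p^2) (by fun_prop)).mul (cmp 1 2))).add
        ((hpoly (fun p => p^3) (by fun_prop)).mul (cmp 2 2)))
    have TZ : Tendsto (fun p : ℝ => g (P p) 3 3 / p - 2 * g (P p) 1 3 - 2*p*g (P p) 2 3
        + p * g (P p) 1 1 + 2*p^2 * g (P p) 1 2 + p^3 * g (P p) 2 2) (𝓝[≠] 0) (𝓝 0) := by
      apply Tendsto.congr' _ tendsto_const_nhds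
      filter_upwards [hεev] with p ⟨hpε, hp0⟩
      have hEp := hE p hpε
      field_simp
      linarith [hEp]
    have := tendsto_nhds_unique TL TZ
    linarith [this]
  -- key tendsto fact for g13
  have T13 : Tendsto (fun p : ℝ => g (P p) 1 3 / p^2) (𝓝[≠] 0) (𝓝 0) :=
    a3_key (fun v => g v 1 3) (hcomp 1 3) w h13
  have T13p : Tendsto (fun p : ℝ => g (P p) 1 3 / p) (𝓝[≠] 0) (𝓝 0) := by
    have := T13.mul (hpoly id continuous_id)
    simp only [mul_zero, id] at this
    refine this.congr' ?_
    filter_upwards [self_mem_nhdsWithin] with p (hp : p ≠ 0)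
    field_simp
  -- step 3 : g^{yz} = g^{xx}/2
  have h23 : g ![w, 0, 0, 0] 2 3 = (1/2) * g ![w, 0, 0, 0] 1 1 := by
    have TL : Tendsto (fun p : ℝ => g (P p) 3 3 / p^2 - 2 * (g (P p) 1 3 / p) - 2 * g (P p) 2 3
        + g (P p) 1 1 + 2*p * g (P p) 1 2 + p^2 * g (P p) 2 2) (𝓝[≠] 0)
        (𝓝 (0 - 2 * 0 - 2 * g ![w,0,0,0] 2 3 + g ![w,0,0,0] 1 1
          + 2*0 * g ![w,0,0,0] 1 2 + 0^2 * g ![w,0,0,0] 2 2)) := by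
      exact (((((T33.sub ((hpoly (fun _ => (2:ℝ)) (by fun_prop)).mul T13p)).sub
        ((hpoly (fun _ => (2:ℝ)) (by fun_prop)).mul (cmp 2 3))).add (cmp 1 1)).add
        ((hpoly (fun p => 2*p) (by fun_prop)).mul (cmp 1 2))).add
        ((hpoly (fun p => p^2) (by fun_prop)).mul (cmp 2 2)))
    have TZ : Tendsto (fun p : ℝ => g (P p) 3 3 / p^2 - 2 * (g (P p) 1 3 / p) - 2 * g (P p) 2 3
        + g (P p) 1 1 + 2*p * g (P p) 1 2 + p^2 * g (P p) 2 2) (𝓝[≠] 0) (𝓝 0) := by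
      apply Tendsto.congr' _ tendsto_const_nhds
      filter_upwards [hεev] with p ⟨hpε, hp0⟩
      have hEp := hE p hpε
      have hkey : g (P p) 3 3 / p^2 - 2 * (g (P p) 1 3 / p) - 2 * g (P p) 2 3
          + g (P p) 1 1 + 2*p * g (P p) 1 2 + p^2 * g (P p) 2 2
          = (g (P p) 3 3 - 2 * p * g (P p) 1 3 - 2 * p ^ 2 * g (P p) 2 3
            + p ^ 2 * g (P p) 1 1 + 2 * p ^ 3 * g (P p) 1 2 + p ^ 4 * g (P p) 2 2) / p^2 := by
        field_simp
      rw [hkey, hEp, zero_div]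
    have := tendsto_nhds_unique TL TZ
    linarith [this]
  exact ⟨h33, h13, h23⟩
end

section
/- In Minkowski space $\mathbb{R}^{1,2}$ with $\eta(V,V) = -V_t^2 + V_x^2 + V_y^2$, fix $C > 2$ and $p \neq 0$. Let $V = (C p^3 \sqrt{1+p^2},\; C p^4,\; (C-4) p^3)$. Then $\eta(V,V) = p^6(16 - 8C) < 0$, i.e. $V$ is timelike. Consequently the straight segment from the cusp wavefront point $(0, -3p^2, 2p^3)$ to the point $(0,-3p^2,-2p^3) + C p^3 \cdot (\sqrt{1+p^2},\, p,\, 1)$, which lies on the null ray emanating from the opposite cusp branch, is timelike; hence the cusp ($A_2$) big wavefront is not achronal. -/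
/-- The Minkowski form `η(V,V) = -V₀² + V₁² + V₂²` on `ℝ^{1,2}`. -/
noncomputable def mink3Sq (V : Fin 3 → ℝ) : ℝ := -(V 0) ^ 2 + (V 1) ^ 2 + (V 2) ^ 2

/-! The chord is `C p³ P - 4 p³ e_y` with `P` null and `η(P, e_y) = 1`, so
`η(V,V) = -8 C p⁶ + 16 p⁶`, which is negative as soon as `C > 2`. -/

@[simp]
lemma mink3Sq_vecCons (a b c : ℝ) : mink3Sq ![a, b, c] = -a ^ 2 + b ^ 2 + c ^ 2 := rfl

lemma mink3Sq_smul_add_vecCons_zero_zero (a b : ℝ) (P : Fin 3 → ℝ) :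
    mink3Sq (a • P + ![0, 0, b]) = a ^ 2 * mink3Sq P + 2 * a * b * P 2 + b ^ 2 := by
  simp only [mink3Sq, Pi.add_apply, Pi.smul_apply, smul_eq_mul, Matrix.cons_val_zero,
    Matrix.cons_val_one, Matrix.cons_val_two, Matrix.head_cons, Matrix.tail_cons]
  ring

lemma mink3Sq_nullGenerator (p : ℝ) : mink3Sq ![Real.sqrt (1 + p ^ 2), p, 1] = 0 := by
  rw [mink3Sq_vecCons, Real.sq_sqrt (by positivity)]
  ring

/-- The explicit timelike chord demonstrating that the cusp (`A₂`) big wavefront is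
not achronal: with `C > 2`, `p ≠ 0`, the displacement `V` from the cusp point
`(0,−3p²,2p³)` to the point affine distance `Cp³` along the null generator through
`(0,−3p²,−2p³)` satisfies `η(V,V) = p⁶(16−8C) < 0`. -/
theorem a2_wavefront_not_achronal (C p : ℝ) (hC : 2 < C) (hp : p ≠ 0) :
    let V : Fin 3 → ℝ :=
      ![C * p ^ 3 * Real.sqrt (1 + p ^ 2), C * p ^ 4, (C - 4) * p ^ 3]
    (((![(0 : ℝ), -3 * p ^ 2, -2 * p ^ 3] + (C * p ^ 3) • ![Real.sqrt (1 + p ^ 2), p, 1])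
        - ![(0 : ℝ), -3 * p ^ 2, 2 * p ^ 3]) = V) ∧
    mink3Sq V = p ^ 6 * (16 - 8 * C) ∧ mink3Sq V < 0 := by
  intro V
  set P : Fin 3 → ℝ := ![Real.sqrt (1 + p ^ 2), p, 1]
  have hV : V = (C * p ^ 3) • P + ![0, 0, -4 * p ^ 3] := by
    funext i
    fin_cases i <;> simp [V, P] <;> ring
  have hηV : mink3Sq V = p ^ 6 * (16 - 8 * C) := by
    rw [hV, mink3Sq_smul_add_vecCons_zero_zero, mink3Sq_nullGenerator]
    simp only [P, Matrix.cons_val_two, Matrix.tail_cons, Matrix.head_cons]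
    ring
  refine ⟨?_, hηV, ?_⟩
  · rw [hV]
    funext i
    fin_cases i <;> simp [P]; ring
  · rw [hηV]
    exact mul_neg_of_pos_of_neg (by positivity) (by linarith)
end

section
/- Let $R: \mathbb{R} \to \mathbb{R}^{n\times n}$ be continuous with symmetric values, and let $A$ solve $\ddot{A} + R A = 0$ with $\dot{A}(\lambda)^{\mathsf T} A(\lambda)$ symmetric for all $\lambda$. Suppose at some $\lambda_0$: the first column of $A(\lambda_0)$ vanishes, the remaining $n-1$ columns of $A(\lambda_0)$ are linearly independent, and the first column of $A$ does not vanish identically as a function of $\lambda$. Then $\frac{d}{d\lambda}\det A(\lambda)\big|_{\lambda = \lambda_0} \neq 0$. -/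
/-!
By Jacobi's formula, `∂_λ det A (λ₀)` is a sum over columns of determinants of `A(λ₀)` with one
column differentiated; all terms but the first keep the zero first column of `A(λ₀)`, so the
derivative is `det B`, where `B` is `A(λ₀)` with first column `c = Ȧ(λ₀) e₀`. Symmetry of `ȦᵀA`
at `λ₀` makes `c` orthogonal to the other columns, which are independent, so `B` is singular
only if `c = 0`. But then the first column of `A` has zero Cauchy data at `λ₀` for the linear
equation `ü + R u = 0`, hence vanishes identically.
-/

open Set Matrix

theorem ODE_linear_solution_eq_zero {E : Type*} [NormedAddCommGroup E] [NormedSpace ℝ E]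
    {L : ℝ → E →L[ℝ] E} (hL : Continuous L) {x : ℝ → E}
    (hx : ∀ t, HasDerivAt x (L t (x t)) t) {t₀ : ℝ} (hx₀ : x t₀ = 0) : x = 0 := by
  funext t
  obtain ⟨a, b, ht, ht₀⟩ : ∃ a b, t ∈ Ioo a b ∧ t₀ ∈ Ioo a b :=
    ⟨min t t₀ - 1, max t t₀ + 1, by grind⟩
  obtain ⟨C, hC⟩ := (isCompact_Icc : IsCompact (Icc a b)).exists_bound_of_continuousOn
    hL.continuousOn
  have hLip : ∀ s ∈ Ioo a b, LipschitzOnWith C.toNNReal (L s) univ := fun s hs =>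
    ((L s).lipschitz.weaken
      (NNReal.le_toNNReal_of_coe_le (hC s (Ioo_subset_Icc_self hs)))).lipschitzOnWith
  exact ODE_solution_unique_of_mem_Ioo hLip ht₀ (fun s _ => ⟨hx s, mem_univ _⟩)
    (fun s _ => ⟨by simp, mem_univ _⟩) hx₀ ht

theorem ODE_jacobi_solution_eq_zero {ι : Type*} [Fintype ι]
    {R : ℝ → Matrix ι ι ℝ} (hR : Continuous R) {u w : ℝ → ι → ℝ}
    (hu : ∀ t, HasDerivAt u (w t) t) (hw : ∀ t, HasDerivAt w (-(R t *ᵥ u t)) t)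
    {t₀ : ℝ} (hu₀ : u t₀ = 0) (hw₀ : w t₀ = 0) : u = 0 := by
  let L : ℝ → (ι → ℝ) × (ι → ℝ) →L[ℝ] (ι → ℝ) × (ι → ℝ) := fun t =>
    (ContinuousLinearMap.snd ℝ (ι → ℝ) (ι → ℝ)).prod
      (-(R t).mulVecLin.toContinuousLinearMap.comp (ContinuousLinearMap.fst ℝ (ι → ℝ) (ι → ℝ)))
  have hL : Continuous L := continuous_clm_apply.mpr fun y =>
    continuous_const.prodMk (hR.matrix_mulVec continuous_const).neg
  have h := ODE_linear_solution_eq_zero hL (x := fun t => (u t, w t))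
    (fun t => (hu t).prodMk (hw t)) (Prod.ext hu₀ hw₀)
  funext t
  exact congrArg Prod.fst (congrFun h t)

theorem Matrix.hasDerivAt_det {𝕜 : Type*} [NontriviallyNormedField 𝕜] {ι : Type*} [Fintype ι]
    [DecidableEq ι] {A : 𝕜 → Matrix ι ι 𝕜} {A' : Matrix ι ι 𝕜} {t : 𝕜}
    (hA : ∀ i j, HasDerivAt (fun s => A s i j) (A' i j) t) :
    HasDerivAt (fun s => (A s).det) (∑ j, ((A t).updateCol j fun i => A' i j).det) t := by
  simp_rw [det_apply']
  refine (HasDerivAt.fun_sum fun σ _ =>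
    (HasDerivAt.fun_finsetProd fun i _ => hA (σ i) i).const_mul
      ((Equiv.Perm.sign σ : ℤ) : 𝕜)).congr_deriv ?_
  rw [Finset.sum_comm]
  refine Finset.sum_congr rfl fun σ _ => ?_
  rw [Finset.mul_sum]
  refine Finset.sum_congr rfl fun j _ => ?_
  rw [← Finset.mul_prod_erase _ _ (Finset.mem_univ j), smul_eq_mul, mul_comm (∏ _ ∈ _, _),
    updateCol_self]
  congr 2
  exact Finset.prod_congr rfl fun k hk => by rw [updateCol_ne (Finset.ne_of_mem_erase hk)]

theorem Matrix.det_updateCol_ne_zero {𝕜 : Type*} [Field 𝕜] [LinearOrder 𝕜]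
    [IsStrictOrderedRing 𝕜] {ι : Type*} [Fintype ι] [DecidableEq ι] {M : Matrix ι ι 𝕜} {j : ι}
    {c : ι → 𝕜} (hc : c ≠ 0) (horth : ∀ k ≠ j, (c ᵥ* M) k = 0)
    (hindep : LinearIndependent 𝕜 fun k : {k // k ≠ j} => fun i => M i k) :
    (M.updateCol j c).det ≠ 0 := by
  intro hdet
  obtain ⟨v, hv, hMv⟩ := exists_mulVec_eq_zero_iff.mpr hdet
  have hvj : v j = 0 := by
    have hcM : c ᵥ* M.updateCol j c = Pi.single j (c ⬝ᵥ c) := by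
      rw [vecMul_updateCol]
      funext k
      by_cases hk : k = j
      · subst hk; simp
      · simp [hk, horth k hk]
    have hcv := congrArg (c ⬝ᵥ ·) hMv
    simp only [dotProduct_mulVec, hcM, single_dotProduct, dotProduct_zero] at hcv
    exact (mul_eq_zero.mp hcv).resolve_left (dotProduct_self_eq_zero.not.mpr hc)
  refine hv (funext fun k => ?_)
  by_cases hk : k = j
  · exact hk ▸ hvj
  refine Fintype.linearIndependent_iff.mp hindep (fun k => v k) (funext fun i => ?_) ⟨k, hk⟩
  have hrow := congrFun hMv i
  rw [mulVec, dotProduct, Fintype.sum_eq_add_sum_subtype_ne _ j, hvj, mul_zero, zero_add] at hrow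
  have hcol : ∀ k : {k // k ≠ j}, M.updateCol j c i k = M i k := fun k => updateCol_ne k.2
  simpa [Finset.sum_apply, hcol, mul_comm] using hrow

theorem jacobi_det_deriv_ne_zero_general (n : ℕ)
    (R A : ℝ → (Fin (n + 1) → Fin (n + 1) → ℝ))
    (hRcont : Continuous R)
    (hA1 : ∀ lam, DifferentiableAt ℝ A lam)
    (hA2 : ∀ lam, DifferentiableAt ℝ (deriv A) lam)
    (hJacobi : ∀ lam i j,
      deriv (deriv A) lam i j + ∑ k, R lam i k * A lam k j = 0)
    (hsym : ∀ lam j k,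
      (∑ i, deriv A lam i j * A lam i k) = (∑ i, deriv A lam i k * A lam i j))
    (lam₀ : ℝ)
    (hcol0 : ∀ i, A lam₀ i 0 = 0)
    (hindep : LinearIndependent ℝ
      (fun j : {j : Fin (n + 1) // j ≠ 0} => fun i => A lam₀ i j.1))
    (hnotid : ¬ ∀ lam i, A lam i 0 = 0) :
    deriv (fun lam => (Matrix.of (A lam)).det) lam₀ ≠ 0 := by
  have hentry {F : ℝ → Fin (n + 1) → Fin (n + 1) → ℝ} {lam : ℝ} (hF : DifferentiableAt ℝ F lam)
      (i j : Fin (n + 1)) : HasDerivAt (fun s => F s i j) (deriv F lam i j) lam :=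
    hasDerivAt_pi.mp (hasDerivAt_pi.mp hF.hasDerivAt i) j
  set c : Fin (n + 1) → ℝ := fun i => deriv A lam₀ i 0
  have hc : c ≠ 0 := by
    intro hc0
    have hu (t : ℝ) : HasDerivAt (fun s i => A s i 0) (fun i => deriv A t i 0) t :=
      hasDerivAt_pi.mpr fun i => hentry (hA1 t) i 0
    have hw (t : ℝ) : HasDerivAt (fun s i => deriv A s i 0)
        (-(R t *ᵥ fun i => A t i 0)) t := by
      refine hasDerivAt_pi.mpr fun i => (hentry (hA2 t) i 0).congr_deriv ?_
      simp only [Pi.neg_apply, mulVec, dotProduct]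
      linarith [hJacobi t i 0]
    have hfirst := ODE_jacobi_solution_eq_zero hRcont hu hw (funext hcol0) hc0
    exact hnotid fun lam i => congrFun (congrFun hfirst lam) i
  have horth : ∀ k ≠ 0, (c ᵥ* Matrix.of (A lam₀)) k = 0 := fun k _ => by
    simpa [vecMul, dotProduct, hcol0] using hsym lam₀ 0 k
  have hdet := Matrix.hasDerivAt_det (A := fun lam => Matrix.of (A lam)) (hentry (hA1 lam₀))
  rw [hdet.deriv, Fintype.sum_eq_add_sum_subtype_ne _ 0, add_eq_left.mpr]
  · exact Matrix.det_updateCol_ne_zero hc horth hindep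
  exact Finset.sum_eq_zero fun k _ =>
    det_eq_zero_of_column_eq_zero 0 fun i => (updateCol_ne (Ne.symm k.2)).trans (hcol0 i)

/-- At a generic focal point, `∂_λ det A ≠ 0`: if `A` solves the matrix Jacobi
equation with symmetric `Ȧᵀ A`, the first column of `A(λ₀)` vanishes, the other
columns are linearly independent, and the first column is not identically zero,
then the derivative of `det A` at `λ₀` is nonzero. -/
theorem jacobi_det_deriv_ne_zero (n : ℕ)
    (R A : ℝ → (Fin (n + 1) → Fin (n + 1) → ℝ))
    (hRcont : Continuous R)
    (hRsymm : ∀ lam i j, R lam i j = R lam j i)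
    (hA1 : ∀ lam, DifferentiableAt ℝ A lam)
    (hA2 : ∀ lam, DifferentiableAt ℝ (deriv A) lam)
    (hJacobi : ∀ lam i j,
      deriv (deriv A) lam i j + ∑ k, R lam i k * A lam k j = 0)
    (hsym : ∀ lam j k,
      (∑ i, deriv A lam i j * A lam i k) = (∑ i, deriv A lam i k * A lam i j))
    (lam₀ : ℝ)
    (hcol0 : ∀ i, A lam₀ i 0 = 0)
    (hindep : LinearIndependent ℝ
      (fun j : {j : Fin (n + 1) // j ≠ 0} => fun i => A lam₀ i j.1))
    (hnotid : ¬ ∀ lam i, A lam i 0 = 0) :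
    deriv (fun lam => (Matrix.of (A lam)).det) lam₀ ≠ 0 :=
  jacobi_det_deriv_ne_zero_general n R A hRcont hA1 hA2 hJacobi hsym lam₀ hcol0 hindep hnotid
end
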